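/- Let (Y,g) be a Riemannian 3-manifold of constant sectional curvature κ and let η be a 1-form satisfying δ_Y η = 0 and Δ_H η = ν η. Then δ_Y K_g(η) = (4κ − ν) η. Similarly, if η = dφ with Δ_H φ = μ φ, then δ_Y K_g(dφ) = (−(4/3)μ + 4κ) dφ. -/

import Mathlib

open scoped BigOperators
open MeasureTheory

/-- Levi-Civita symbol on `Fin 3` (components of the volume form in an
oriented orthonormal frame), with `eps 0 1 2 = 1`. -/
noncomputable def eps : Fin 3 → Fin 3 → Fin 3 → ℝ := fun i j k =>
  if (i, j, k) = (0, 1, 2) ∨ (i, j, k) = (1, 2, 0) ∨ (i, j, k) = (2, 0, 1) then 1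
  else if (i, j, k) = (2, 1, 0) ∨ (i, j, k) = (1, 0, 2) ∨ (i, j, k) = (0, 2, 1) then -1
  else 0

/-- Kronecker delta: the components of the metric in an orthonormal frame. -/
noncomputable def kd : Fin 3 → Fin 3 → ℝ := fun i j => if i = j then 1 else 0

/-- The Dirac-type operator `đ`:  given `D k l j = ∇ₖ h_{lj}` (the covariant
derivative components of a symmetric 2-tensor `h`), this is
`(đh)_{ij} = Sym_{ij} ( Σ_{k,l} ε_{ikl} (∇ₖ h_{lj} − ∇ₗ h_{kj}) )`. -/
noncomputable def dslash (D : Fin 3 → Fin 3 → Fin 3 → ℝ) (i j : Fin 3) : ℝ :=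
  (1/2) * ((∑ k, ∑ l, eps i k l * (D k l j - D l k j))
    + (∑ k, ∑ l, eps j k l * (D k l i - D l k i)))

/-- Components `∇_a (đh)_{ij}` of the covariant derivative of `đh`, given the
second covariant derivative components `D2 a k l j = ∇_a ∇ₖ h_{lj}` of `h`. -/
noncomputable def dslashD (D2 : Fin 3 → Fin 3 → Fin 3 → Fin 3 → ℝ) (a i j : Fin 3) : ℝ :=
  (1/2) * ((∑ k, ∑ l, eps i k l * (D2 a k l j - D2 a l k j))
    + (∑ k, ∑ l, eps j k l * (D2 a k l i - D2 a l k i)))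

/-!
Both identities come from one contraction of the Ricci identity: in constant curvature `κ` in
dimension 3 the Ricci tensor is `2κ g`, so commuting the first two derivatives of `∇∇η` and
tracing gives `Σᵢ ∇ᵢ∇ⱼηᵢ = Σᵢ ∇ⱼ∇ᵢηᵢ + 2κ ηⱼ`. The last trace vanishes for coclosed `η` and
equals `-μ ∇ⱼφ` for `η = dφ`; the remaining term `Σᵢ ∇ᵢ∇ᵢηⱼ` is given by the eigenvalue equation
for `η`, and for `η = dφ` by the symmetry `∇ᵢ∇ᵢ∇ⱼφ = ∇ᵢ∇ⱼ∇ᵢφ`.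
-/

theorem sum_kd_mul (j : Fin 3) (f : Fin 3 → ℝ) : ∑ a, kd j a * f a = f j := by
  simp [kd]

theorem sum_kd_self : ∑ a : Fin 3, kd a a = 3 := by
  simp [kd]

theorem sum_contract_swap_of_constCurvature {κ : ℝ} {X : Fin 3 → ℝ}
    {T : Fin 3 → Fin 3 → Fin 3 → ℝ}
    (hT : ∀ a b c, T a b c - T b a c = -κ * (kd b c * X a - kd a c * X b)) (j : Fin 3) :
    ∑ a, T a j a = ∑ a, T j a a + 2 * κ * X j := by
  have htrace : ∑ a, (T a j a - T j a a) = 2 * κ * X j := by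
    simp only [hT, mul_sub, Finset.sum_sub_distrib, ← Finset.mul_sum, sum_kd_mul,
      ← Finset.sum_mul, sum_kd_self]
    ring
  rw [Finset.sum_sub_distrib] at htrace
  linarith

theorem div_confKilling_of_coclosed_eigenform {κ ν : ℝ} {η : Fin 3 → ℝ}
    {D2η : Fin 3 → Fin 3 → Fin 3 → ℝ}
    (hcomm : ∀ a b c, D2η a b c - D2η b a c = -κ * (kd b c * η a - kd a c * η b))
    (hco' : ∀ k, ∑ a, D2η k a a = 0)
    (heig : ∀ c, -(∑ a, D2η c a a) - (∑ a, D2η a a c) + (∑ a, D2η a c a) = ν * η c)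
    (j : Fin 3) :
    (∑ i, D2η i i j) + (∑ i, D2η i j i) - (2/3) * (∑ k, D2η j k k) = (4 * κ - ν) * η j := by
  have hswap := sum_contract_swap_of_constCurvature hcomm j
  have hj := heig j
  rw [hco' j] at hswap hj ⊢
  linarith

theorem div_confKilling_of_exact_eigenform {κ μ : ℝ} {Dφ : Fin 3 → ℝ}
    {D3φ : Fin 3 → Fin 3 → Fin 3 → ℝ}
    (hsymm : ∀ a b c, D3φ a b c = D3φ a c b)
    (hcomm : ∀ a b c, D3φ a b c - D3φ b a c = -κ * (kd b c * Dφ a - kd a c * Dφ b))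
    (heig' : ∀ k, -(∑ a, D3φ k a a) = μ * Dφ k) (j : Fin 3) :
    (∑ i, D3φ i i j) + (∑ i, D3φ i j i) - (2/3) * (∑ k, D3φ j k k)
      = (-(4/3) * μ + 4 * κ) * Dφ j := by
  have hswap := sum_contract_swap_of_constCurvature hcomm j
  have hj := heig' j
  simp only [← hsymm _ _ j] at hswap ⊢
  linarith

/-- Components at a point in an orthonormal frame: `D2η a b c = ∇_a∇_b η_c`, `Dφ a = ∇_a φ`,
`D3φ a b c = ∇_a∇_b∇_c φ`; the left-hand sides are `(δ_Y K_g η)_j = Σ_i ∇_i K_g(η)_{ij}`. -/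
theorem statement15_general (κ ν μ : ℝ)
    (η : Fin 3 → ℝ) (D2η : Fin 3 → Fin 3 → Fin 3 → ℝ)
    (hcommη : ∀ a b c, D2η a b c - D2η b a c = -κ * (kd b c * η a - kd a c * η b))
    (hco' : ∀ k, (∑ a, D2η k a a) = 0)
    (heigη : ∀ c, (-(∑ a, D2η c a a) - (∑ a, D2η a a c) + (∑ a, D2η a c a))
      = ν * η c)
    (Dφ : Fin 3 → ℝ)
    (D3φ : Fin 3 → Fin 3 → Fin 3 → ℝ)
    (hD3sym : ∀ a b c, D3φ a b c = D3φ a c b)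
    (hcommφ : ∀ a b c, D3φ a b c - D3φ b a c = -κ * (kd b c * Dφ a - kd a c * Dφ b))
    (heigφ' : ∀ k, -(∑ a, D3φ k a a) = μ * Dφ k) :
    (∀ j, (∑ i, D2η i i j) + (∑ i, D2η i j i) - (2/3) * (∑ k, D2η j k k)
        = (4 * κ - ν) * η j)
    ∧ (∀ j, (∑ i, D3φ i i j) + (∑ i, D3φ i j i) - (2/3) * (∑ k, D3φ j k k)
        = (-(4/3) * μ + 4 * κ) * Dφ j) :=
  ⟨div_confKilling_of_coclosed_eigenform hcommη hco' heigη,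
    div_confKilling_of_exact_eigenform hD3sym hcommφ heigφ'⟩

/-- on a 3-manifold of constant sectional curvature κ:
(a) if `η` is a coclosed 1-form with `Δ_H η = ν η`, then
    `δ_Y K_g(η) = (4κ − ν) η`;
(b) if `η = dφ` with `Δ_H φ = μ φ`, then `δ_Y K_g(dφ) = (−(4/3)μ + 4κ) dφ`.
Components at a point in an orthonormal frame.  For (a): `η`,
`Dη a b = ∇_a η_b`, `D2η a b c = ∇_a∇_b η_c`, coclosedness `Σ_a Dη a a = 0`
(together with its derivative), the Hodge Laplacian on 1-forms as in
`(Δ_H η)_c = −Σ_a D2η c a a − Σ_a D2η a a c + Σ_a D2η a c a`, and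
`(δ_Y K_g(η))_j = Σ_i ∇_i K_g(η)_{ij}`.  For (b): `φ`, `Dφ a = ∇_a φ`,
`D2φ a b = ∇_a∇_b φ` (a symmetric Hessian), `D3φ a b c = ∇_a∇_b∇_c φ`, with
`Δ_H φ = δdφ = −Σ_a D2φ a a = μ φ` (and its derivative). -/
theorem statement15 (κ ν μ : ℝ)
    (η : Fin 3 → ℝ) (Dη : Fin 3 → Fin 3 → ℝ) (D2η : Fin 3 → Fin 3 → Fin 3 → ℝ)
    (hcommη : ∀ a b c, D2η a b c - D2η b a c = -κ * (kd b c * η a - kd a c * η b))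
    (hco : (∑ a, Dη a a) = 0)
    (hco' : ∀ k, (∑ a, D2η k a a) = 0)
    (heigη : ∀ c, (-(∑ a, D2η c a a) - (∑ a, D2η a a c) + (∑ a, D2η a c a))
      = ν * η c)
    (φ : ℝ) (Dφ : Fin 3 → ℝ) (D2φ : Fin 3 → Fin 3 → ℝ)
    (D3φ : Fin 3 → Fin 3 → Fin 3 → ℝ)
    (hhess : ∀ a b, D2φ a b = D2φ b a)
    (hD3sym : ∀ a b c, D3φ a b c = D3φ a c b)
    (hcommφ : ∀ a b c, D3φ a b c - D3φ b a c = -κ * (kd b c * Dφ a - kd a c * Dφ b))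
    (heigφ : -(∑ a, D2φ a a) = μ * φ)
    (heigφ' : ∀ k, -(∑ a, D3φ k a a) = μ * Dφ k) :
    (∀ j, (∑ i, D2η i i j) + (∑ i, D2η i j i) - (2/3) * (∑ k, D2η j k k)
        = (4 * κ - ν) * η j)
    ∧ (∀ j, (∑ i, D3φ i i j) + (∑ i, D3φ i j i) - (2/3) * (∑ k, D3φ j k k)
        = (-(4/3) * μ + 4 * κ) * Dφ j) :=
  statement15_general κ ν μ η D2η hcommη hco' heigη Dφ D3φ hD3sym hcommφ heigφ'
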